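/- For every integer m ≥ 1 and every integer n ≥ 0, P( R_m = 0, D_m = n, and R_i ≥ 1 for all 0 ≤ i ≤ m−1 ) = (1/m) · P( R_m = 0 and D_m = n ). -/

import Mathlib

/-!
Write `x ∈ ℤ^m` for the steps and `S` for the partial sums of the periodic extension of `x`;
when the steps sum to `-1`, `S (t + m) = S t - 1`. The rotation of `x` by `j` has nonnegative
partial sums of every length `< m` iff `S j ≤ S (j + i)` for all `i < m`, and exactly one
`j < m` has this property: the first minimiser of `S` on `[0, m)` does, and two of them
`j < j'` would give `S j ≤ S j' ≤ S (j + m) = S j - 1`. Rotations preserve the i.i.d. law, the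
total and the number of `-1` steps, so `{R_m = 0, D_m = n}` splits into `m` disjoint events of
equal probability, one of which is the first-passage event.
-/

open MeasureTheory ProbabilityTheory Finset
open Fin.NatCast

lemma ProbabilityTheory.iIndepFun.map_fin_eq_pi {Ω β : Type*} [MeasurableSpace Ω]
    [MeasurableSpace β] {P : Measure Ω} {X : ℕ → Ω → β} {ν : Measure β}
    (hX : ∀ i, AEMeasurable (X i) P) (hiid : iIndepFun X P) (hlaw : ∀ i, P.map (X i) = ν)
    (m : ℕ) : P.map (fun ω (i : Fin m) => X i ω) = Measure.pi fun _ => ν := by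
  rw [iIndepFun.map_fun_eq_pi_map (f := fun i : Fin m => X i) (fun i => hX i)
    (hiid.precomp Fin.val_injective)]
  simp only [hlaw]

namespace CycleLemma

section WindowMin

def IsWindowMin (S : ℕ → ℤ) (m j : ℕ) : Prop := ∀ i < m, S j ≤ S (j + i)

variable {S : ℕ → ℤ} {m : ℕ}

lemma exists_isWindowMin (hm : 0 < m) (hS : ∀ t, S (t + m) = S t - 1) :
    ∃ j < m, IsWindowMin S m j := by
  have hmin : ∃ j, j < m ∧ ∀ t < m, S j ≤ S t := by
    obtain ⟨j, hj, hjmin⟩ := (range m).exists_min_image S ⟨0, mem_range.2 hm⟩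
    exact ⟨j, mem_range.1 hj, fun t ht => hjmin t (mem_range.2 ht)⟩
  obtain ⟨hjm, hjmin⟩ := Nat.find_spec hmin
  have hbefore : ∀ t < Nat.find hmin, S (Nat.find hmin) < S t := by
    intro t ht
    obtain ⟨t', ht'm, ht'⟩ : ∃ t' < m, S t' < S t := by
      simpa [ht.trans hjm] using Nat.find_min hmin ht
    exact (hjmin t' ht'm).trans_lt ht'
  refine ⟨Nat.find hmin, hjm, fun i hi => ?_⟩
  by_cases hwrap : Nat.find hmin + i < m
  · exact hjmin _ hwrap
  · have := hbefore (Nat.find hmin + i - m) (by omega)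
    have := hS (Nat.find hmin + i - m)
    rw [Nat.sub_add_cancel (by omega)] at this
    omega

lemma IsWindowMin.eq {j j' : ℕ} (hS : ∀ t, S (t + m) = S t - 1) (hjm : j < m)
    (hj'm : j' < m) (hj : IsWindowMin S m j) (hj' : IsWindowMin S m j') : j = j' := by
  wlog hjj' : j < j' generalizing j j'
  · rcases (not_lt.1 hjj').eq_or_lt with h | h
    · exact h.symm
    · exact (this hj'm hjm hj' hj h).symm
  have h1 := hj (j' - j) (by omega)
  have h2 := hj' (j + m - j') (by omega)
  rw [Nat.add_sub_cancel' hjj'.le] at h1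
  rw [Nat.add_sub_cancel' (by omega), hS] at h2
  omega

end WindowMin

section Walk

variable {G : Type*} [AddCommMonoid G] {m : ℕ} [NeZero m]

/-- The cast `ℕ → Fin m` reduces modulo `m`, so this is the walk of the periodic extension. -/
def walk (x : Fin m → G) (t : ℕ) : G := ∑ k ∈ range t, x k

def rotate {α : Type*} (j : ℕ) (x : Fin m → α) : Fin m → α := fun i => x (i + j)

@[simp] lemma walk_zero (x : Fin m → G) : walk x 0 = 0 := sum_range_zero _

lemma walk_fin_of_le (f : ℕ → G) {t : ℕ} (ht : t ≤ m) :
    walk (fun i : Fin m => f i) t = ∑ k ∈ range t, f k :=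
  sum_congr rfl fun _ hk => congrArg f (Fin.val_cast_of_lt ((mem_range.1 hk).trans_le ht))

lemma walk_add_rotate (x : Fin m → G) (j t : ℕ) :
    walk x (j + t) = walk x j + walk (rotate j x) t := by
  rw [walk, sum_range_add]
  simp [walk, rotate, add_comm]

lemma walk_add_period (x : Fin m → G) (t : ℕ) : walk x (t + m) = walk x t + walk x m := by
  rw [add_comm t, walk_add_rotate, add_comm]
  simp [walk, rotate]

lemma walk_rotate_period {G : Type*} [AddCancelCommMonoid G] (x : Fin m → G) (j : ℕ) :
    walk (rotate j x) m = walk x m := by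
  have := walk_add_rotate x j m
  rwa [walk_add_period, add_left_cancel_iff, eq_comm] at this

lemma card_filter_rotate {α : Type*} (p : α → Prop) [DecidablePred p] (x : Fin m → α)
    (j : ℕ) :
    #((range m).filter fun k : ℕ => p (rotate j x k)) =
      #((range m).filter fun k : ℕ => p (x k)) := by
  rw [card_filter, card_filter]
  exact walk_rotate_period (fun i => if p (x i) then 1 else 0) j

end Walk

section RotationInvariance

variable {m : ℕ} [NeZero m]

lemma measurePreserving_rotate {α : Type*} [MeasurableSpace α] (ν : Measure α) [SigmaFinite ν]
    (j : ℕ) :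
    MeasurePreserving (rotate j) (Measure.pi fun _ : Fin m => ν) (Measure.pi fun _ => ν) := by
  convert measurePreserving_piCongrLeft (fun _ : Fin m => ν) (Equiv.subRight (j : Fin m))
  ext x i
  simp [rotate, MeasurableEquiv.coe_piCongrLeft, Equiv.piCongrLeft_apply]

lemma preimage_rotate_setOf_isWindowMin_zero (j : ℕ) :
    rotate j ⁻¹' {x : Fin m → ℤ | IsWindowMin (walk x) m 0} =
      {x | IsWindowMin (walk x) m j} := by
  ext x
  simp only [Set.mem_preimage, Set.mem_ofPred_eq, IsWindowMin, walk_add_rotate, walk_zero,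
    zero_add, le_add_iff_nonneg_right]

theorem natCast_mul_pi_inter_isWindowMin_zero (ν : Measure ℤ) [SigmaFinite ν]
    {E : Set (Fin m → ℤ)} (hE : ∀ j, rotate j ⁻¹' E = E)
    (hwalk : ∀ x ∈ E, walk x m = -1) :
    m * Measure.pi (fun _ => ν) (E ∩ {x | IsWindowMin (walk x) m 0}) =
      Measure.pi (fun _ => ν) E := by
  set W : ℕ → Set (Fin m → ℤ) := fun j => E ∩ {x | IsWindowMin (walk x) m j}
  have hperiod : ∀ x ∈ E, ∀ t, walk x (t + m) = walk x t - 1 := fun x hx t => by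
    rw [walk_add_period, hwalk x hx, sub_eq_add_neg]
  have hcover : ⋃ j ∈ range m, W j = E := by
    ext x
    simp only [Set.mem_iUnion, mem_range, W, Set.mem_inter_iff, Set.mem_ofPred_eq,
      exists_prop]
    exact ⟨fun ⟨_, _, hx, _⟩ => hx, fun hx =>
      (exists_isWindowMin (NeZero.pos m) (hperiod x hx)).imp fun j hj => ⟨hj.1, hx, hj.2⟩⟩
  have hdisj : (range m : Set ℕ).PairwiseDisjoint W := fun j hj j' hj' hne =>
    Set.disjoint_left.2 fun x hx hx' =>
      hne (hx.2.eq (hperiod x hx.1) (mem_range.1 hj) (mem_range.1 hj') hx'.2)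
  have hrot : ∀ j, rotate j ⁻¹' W 0 = W j := fun j => by
    simp only [W, Set.preimage_inter, hE, preimage_rotate_setOf_isWindowMin_zero]
  calc (m : ENNReal) * Measure.pi (fun _ => ν) (W 0)
      = ∑ j ∈ range m, Measure.pi (fun _ => ν) (W j) := by
        rw [sum_congr rfl fun j _ => (hrot j).symm ▸
          (measurePreserving_rotate ν j).measure_preimage
            MeasurableSet.of_discrete.nullMeasurableSet,
          sum_const, card_range, nsmul_eq_mul]
    _ = Measure.pi (fun _ => ν) E := by
        rw [← measure_biUnion_finset hdisj fun _ _ => .of_discrete, hcover]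

end RotationInvariance

section Events

def returnSet (m n : ℕ) [NeZero m] : Set (Fin m → ℤ) :=
  {x | 1 + walk x m = 0 ∧ #((range m).filter fun k : ℕ => x k = -1) = n}

variable {m : ℕ} [NeZero m]

lemma preimage_rotate_returnSet (n j : ℕ) : rotate j ⁻¹' returnSet m n = returnSet m n := by
  ext x
  simp only [returnSet, Set.mem_preimage, Set.mem_ofPred_eq, walk_rotate_period,
    card_filter_rotate (· = -1)]

lemma fin_mem_returnSet_iff (f : ℕ → ℤ) (n : ℕ) :
    (fun i : Fin m => f i) ∈ returnSet m n ↔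
      1 + ∑ k ∈ range m, f k = 0 ∧ #((range m).filter fun k => f k = -1) = n := by
  have hdown :
      (range m).filter (fun k : ℕ => f (k : Fin m) = -1) = (range m).filter (f · = -1) :=
    filter_congr fun k hk => by rw [Fin.val_cast_of_lt (mem_range.1 hk)]
  simp only [returnSet, Set.mem_ofPred_eq, walk_fin_of_le f le_rfl, hdown]

lemma isWindowMin_walk_fin_zero_iff (f : ℕ → ℤ) :
    IsWindowMin (walk fun i : Fin m => f i) m 0 ↔
      ∀ i < m, 1 ≤ 1 + ∑ k ∈ range i, f k := by
  simp only [IsWindowMin, walk_zero, zero_add, le_add_iff_nonneg_right]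
  exact forall₂_congr fun i hi => by rw [walk_fin_of_le f hi.le]

end Events

end CycleLemma

open CycleLemma

theorem cyclic_first_passage_general
    (Ω : Type*) [MeasurableSpace Ω] (P : Measure Ω)
    (μ : PMF ℤ) (X : ℕ → Ω → ℤ)
    (hX : ∀ i, Measurable (X i))
    (hiid : iIndepFun X P)
    (hlaw : ∀ i, Measure.map (X i) P = μ.toMeasure)
    (m n : ℕ) (hm : 1 ≤ m) :
    P {ω | 1 + ∑ i ∈ Finset.range m, X i ω = 0 ∧
           ((Finset.range m).filter (fun i => X i ω = -1)).card = n ∧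
           ∀ i < m, 1 ≤ 1 + ∑ k ∈ Finset.range i, X k ω}
    = (1 / (m : ENNReal)) *
      P {ω | 1 + ∑ i ∈ Finset.range m, X i ω = 0 ∧
             ((Finset.range m).filter (fun i => X i ω = -1)).card = n} := by
  have : NeZero m := ⟨by omega⟩
  set Y : Ω → Fin m → ℤ := fun ω i => X i ω
  have hP : ∀ s, P (Y ⁻¹' s) = Measure.pi (fun _ => μ.toMeasure) s := fun s => by
    rw [← hiid.map_fin_eq_pi (fun i => (hX i).aemeasurable) hlaw m,
      Measure.map_apply (measurable_pi_lambda Y fun i => hX i) .of_discrete]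
  have hB :
      {ω | 1 + ∑ i ∈ range m, X i ω = 0 ∧ #((range m).filter fun i => X i ω = -1) = n} =
        Y ⁻¹' returnSet m n :=
    Set.ext fun ω => (fin_mem_returnSet_iff (X · ω) n).symm
  have hA : {ω | ∀ i < m, 1 ≤ 1 + ∑ k ∈ range i, X k ω} =
      Y ⁻¹' {x | IsWindowMin (walk x) m 0} :=
    Set.ext fun ω => (isWindowMin_walk_fin_zero_iff (X · ω)).symm
  simp only [← and_assoc]
  rw [Set.ofPred_and, hA, hB, ← Set.preimage_inter, hP, hP,
    ← natCast_mul_pi_inter_isWindowMin_zero _ (preimage_rotate_returnSet n)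
      fun x hx => by linarith [hx.1],
    ← mul_assoc, one_div, ENNReal.inv_mul_cancel (by exact_mod_cast this.ne)
      (ENNReal.natCast_ne_top m), one_mul]

/-- **Feller's cyclic lemma for first passage events.** For an i.i.d. walk
`R_k = 1 + ∑_{i<k} X_i` with `D_k = #{i < k : X_i = -1}`, the probability that the
walk hits `0` at time `m` while staying `≥ 1` before, with `n` down-steps of size one,
is `1/m` times the unconstrained probability. -/
theorem cyclic_first_passage
    (Ω : Type*) [MeasurableSpace Ω] (P : Measure Ω) [IsProbabilityMeasure P]
    (μ : PMF ℤ) (X : ℕ → Ω → ℤ)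
    (hX : ∀ i, Measurable (X i))
    (hiid : iIndepFun X P)
    (hlaw : ∀ i, Measure.map (X i) P = μ.toMeasure)
    (m n : ℕ) (hm : 1 ≤ m) :
    P {ω | 1 + ∑ i ∈ Finset.range m, X i ω = 0 ∧
           ((Finset.range m).filter (fun i => X i ω = -1)).card = n ∧
           ∀ i < m, 1 ≤ 1 + ∑ k ∈ Finset.range i, X k ω}
    = (1 / (m : ENNReal)) *
      P {ω | 1 + ∑ i ∈ Finset.range m, X i ω = 0 ∧
             ((Finset.range m).filter (fun i => X i ω = -1)).card = n} :=
  cyclic_first_passage_general Ω P μ X hX hiid hlaw m n hm
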